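/- Let S be a strictly increasing unbounded rcll function on [0,∞) with inverse L, and suppose t is a point such that S is continuous at L(t) and t lies in the closure of the range of S from both sides (t is both a left- and right-limit point of the range). Then L is continuous at t and both left- and right-increasing at t: s < t < u implies L(s) < L(t) < L(u). -/

import Mathlib

open Filter Topology Set Function MeasureTheory NNReal

noncomputable section

/-- Right-continuous with left limits (rcll / càdlàg) on `[0,∞)`. -/
def Cadlag {E : Type*} [TopologicalSpace E] (f : ℝ≥0 → E) : Prop :=
  (∀ t : ℝ≥0, Tendsto f (𝓝[>] t) (𝓝 (f t))) ∧
    ∀ t : ℝ≥0, 0 < t → ∃ l, Tendsto f (𝓝[<] t) (𝓝 l)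

/-- Left-continuous with right limits (lcrl) on `[0,∞)`. -/
def Lcrl {E : Type*} [TopologicalSpace E] (f : ℝ≥0 → E) : Prop :=
  (∀ t : ℝ≥0, 0 < t → Tendsto f (𝓝[<] t) (𝓝 (f t))) ∧
    ∀ t : ℝ≥0, ∃ l, Tendsto f (𝓝[>] t) (𝓝 l)

/-- Generalized (right-continuous) inverse `σ⁻¹(t) = inf {s ≥ 0 : σ(s) > t}`. -/
def ginv (σ : ℝ≥0 → ℝ≥0) (t : ℝ≥0) : ℝ≥0 := sInf {s : ℝ≥0 | t < σ s}

/-- Left-continuous version `f⁻` of a path: `f⁻(t) = f(t-)` for `t > 0`, `f⁻(0) = f(0)`. -/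
def lver {E : Type*} [TopologicalSpace E] (f : ℝ≥0 → E) : ℝ≥0 → E :=
  fun t => if t = 0 then f 0 else leftLim f t

/-- Right-continuous version `f⁺` of a path: `f⁺(t) = f(t+)`. -/
def rver {E : Type*} [TopologicalSpace E] (f : ℝ≥0 → E) : ℝ≥0 → E :=
  fun t => rightLim f t

/-!
Because `S` is strictly increasing, `ginv S (S c) = c`, so `ginv S` is a monotone surjection of
`ℝ≥0` onto itself and hence continuous. A point `S v` of the range strictly between `s` and `t`
gives `ginv S s ≤ v < ginv S t`. Continuity of `S` at `x = ginv S t` forces `S x = t`, and then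
`ginv S u ≤ x` for some `u > t` would give `u ≤ S x = t`.
-/

section ginv

variable {S : ℝ≥0 → ℝ≥0} {t a x : ℝ≥0}

lemma ginv_le_of_lt_apply (h : t < S a) : ginv S t ≤ a :=
  csInf_le (OrderBot.bddBelow _) h

lemma apply_le_of_lt_ginv (h : a < ginv S t) : S a ≤ t :=
  not_lt.1 fun h' => (ginv_le_of_lt_apply h').not_gt h

lemma lt_apply_of_ginv_lt (hS : Monotone S) (ht : ∃ s, t < S s) (h : ginv S t < a) :
    t < S a := by
  obtain ⟨b, hb, hba⟩ := (csInf_lt_iff (OrderBot.bddBelow _) ht).1 h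
  exact hb.trans_le (hS hba.le)

lemma le_apply_of_ginv_le (hS : Monotone S) (ht : ∃ s, t < S s)
    (hx : ContinuousWithinAt S (Ioi x) x) (h : ginv S t ≤ x) : t ≤ S x :=
  ge_of_tendsto hx <| eventually_nhdsWithin_of_forall fun _ ha =>
    (lt_apply_of_ginv_lt hS ht (h.trans_lt ha)).le

lemma lt_ginv_of_apply_lt (hS : Monotone S) (ht : ∃ s, t < S s)
    (hx : ContinuousWithinAt S (Ioi (ginv S t)) (ginv S t)) (h : S a < t) : a < ginv S t :=
  not_le.1 fun ha => h.not_ge ((le_apply_of_ginv_le hS ht hx le_rfl).trans (hS ha))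

lemma apply_ginv_le (hx : ContinuousWithinAt S (Iio (ginv S t)) (ginv S t))
    (h0 : 0 < ginv S t) : S (ginv S t) ≤ t :=
  haveI : (𝓝[<] ginv S t).NeBot := nhdsLT_neBot_of_exists_lt ⟨0, h0⟩
  le_of_tendsto hx <| eventually_nhdsWithin_of_forall fun _ ha => apply_le_of_lt_ginv ha

lemma apply_ginv_eq (hS : Monotone S) (ht : ∃ s, t < S s) (hx : ContinuousAt S (ginv S t))
    (h0 : 0 < ginv S t) : S (ginv S t) = t :=
  (apply_ginv_le hx.continuousWithinAt h0).antisymm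
    (le_apply_of_ginv_le hS ht hx.continuousWithinAt le_rfl)

lemma ginv_apply (hS : StrictMono S) (c : ℝ≥0) : ginv S (S c) = c := by
  simp only [ginv, hS.lt_iff_lt]
  exact csInf_Ioi

lemma ginv_mono (hub : ∀ t, ∃ s, t < S s) : Monotone (ginv S) := fun _ t hst =>
  csInf_le_csInf (OrderBot.bddBelow _) (hub t) fun _ hu => hst.trans_lt hu

lemma continuous_ginv (hS : StrictMono S) (hub : ∀ t, ∃ s, t < S s) : Continuous (ginv S) :=
  (ginv_mono hub).continuous_of_surjective fun c => ⟨S c, ginv_apply hS c⟩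

end ginv

theorem stmt16_general (S : ℝ≥0 → ℝ≥0) (hsm : StrictMono S)
    (hub : ∀ M : ℝ≥0, ∃ s, M < S s) (t : ℝ≥0)
    (hcont : ContinuousAt S (ginv S t))
    (hleft : t ∈ closure (Set.range S ∩ Set.Iio t)) :
    ContinuousAt (ginv S) t ∧
      ∀ s u : ℝ≥0, s < t → t < u → ginv S s < ginv S t ∧ ginv S t < ginv S u := by
  have hcont_right : ContinuousWithinAt S (Ioi (ginv S t)) (ginv S t) := hcont.continuousWithinAt
  have lt_ginv {a : ℝ≥0} : S a < t → a < ginv S t :=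
    lt_ginv_of_apply_lt hsm.monotone (hub t) hcont_right
  obtain ⟨_, ⟨u₀, rfl⟩, hu₀⟩ := closure_nonempty_iff.1 ⟨t, hleft⟩
  have hSx : S (ginv S t) = t :=
    apply_ginv_eq hsm.monotone (hub t) hcont (pos_of_gt (lt_ginv hu₀))
  refine ⟨(continuous_ginv hsm hub).continuousAt, fun s u hs hu => ⟨?_, ?_⟩⟩
  · obtain ⟨_, hvs, ⟨v, rfl⟩, hvt⟩ := mem_closure_iff.1 hleft (Ioi s) isOpen_Ioi hs
    exact (ginv_le_of_lt_apply hvs).trans_lt (lt_ginv hvt)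
  · by_contra! h
    exact hu.not_ge (hSx ▸ le_apply_of_ginv_le hsm.monotone (hub u) hcont_right h)

/-- let `S` be rcll, strictly increasing and unbounded with inverse `L`.
If `S` is continuous at `L(t)` and `t` is both a left- and a right-limit point of the
range of `S`, then `L` is continuous at `t` and both left- and right-increasing at
`t`: `s < t < u` implies `L(s) < L(t) < L(u)`. -/
theorem stmt16 (S : ℝ≥0 → ℝ≥0) (hS : Cadlag S) (hsm : StrictMono S)
    (hub : ∀ M : ℝ≥0, ∃ s, M < S s) (t : ℝ≥0)
    (hcont : ContinuousAt S (ginv S t))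
    (hleft : t ∈ closure (Set.range S ∩ Set.Iio t))
    (hright : t ∈ closure (Set.range S ∩ Set.Ioi t)) :
    ContinuousAt (ginv S) t ∧
      ∀ s u : ℝ≥0, s < t → t < u → ginv S s < ginv S t ∧ ginv S t < ginv S u :=
  stmt16_general S hsm hub t hcont hleft
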